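/- For every graph G and any maximum critical independent set I of G, core(G) = core(G[L^c(G)]) ∪ M(N(I) \ corona(G)) ∪ ker(G), for every maximum matching M of G[L(G)]. -/

import Mathlib

open Finset

variable {V : Type*} [Fintype V] [DecidableEq V] (G : SimpleGraph V) [DecidableRel G.Adj]

/-- `N(S)`: the set of vertices adjacent to some vertex of `S`. -/
def nbhd (S : Finset V) : Finset V := S.biUnion (fun v => G.neighborFinset v)

/-- `S` is an independent set of `G`. -/
def Indep (S : Finset V) : Prop := ∀ u ∈ S, ∀ v ∈ S, ¬ G.Adj u v

/-- The difference `d_G(S) = |S| - |N(S)|`. -/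
def diffI (S : Finset V) : ℤ := (S.card : ℤ) - ((nbhd G S).card : ℤ)

/-- `S` is a maximum independent set of `G`. -/
def IsMaxIndep (S : Finset V) : Prop :=
  Indep G S ∧ ∀ T : Finset V, Indep G T → T.card ≤ S.card

/-- `I` is a critical independent set of `G`. -/
def IsCritIndep (I : Finset V) : Prop :=
  Indep G I ∧ ∀ J : Finset V, Indep G J → diffI G J ≤ diffI G I

/-- `I` is a maximum critical independent set of `G`. -/
def IsMaxCritIndep (I : Finset V) : Prop :=
  IsCritIndep G I ∧ ∀ J : Finset V, IsCritIndep G J → J.card ≤ I.card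

/-- `core(G)`: intersection of all maximum independent sets. -/
def core : Set V := {v | ∀ S : Finset V, IsMaxIndep G S → v ∈ S}

/-- `corona(G)`: union of all maximum independent sets. -/
def corona : Set V := {v | ∃ S : Finset V, IsMaxIndep G S ∧ v ∈ S}

/-- `nucleus(G)`: intersection of all maximum critical independent sets. -/
def nucleus : Set V := {v | ∀ S : Finset V, IsMaxCritIndep G S → v ∈ S}

/-- `diadem(G)`: union of all maximum critical independent sets. -/
def diadem : Set V := {v | ∃ S : Finset V, IsMaxCritIndep G S ∧ v ∈ S}

/-- `ker(G)`: intersection of all critical independent sets. -/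
def kerS : Set V := {v | ∀ S : Finset V, IsCritIndep G S → v ∈ S}

/-- A matching of `G`, given as an involution of the vertex set:
unmatched vertices are fixed points, matched vertices are sent to their partner. -/
def IsMatching (M : V → V) : Prop :=
  Function.Involutive M ∧ ∀ v, M v ≠ v → G.Adj v (M v)

/-- Twice the number of edges of the matching `M`, i.e. the number of matched vertices. -/
def matchSize (M : V → V) : ℕ := (univ.filter fun v => M v ≠ v).card

/-- `M` is a maximum matching of `G`. -/
def IsMaxMatching (M : V → V) : Prop :=
  IsMatching G M ∧ ∀ M' : V → V, IsMatching G M' → matchSize M' ≤ matchSize M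

/-- `M` is a matching of the induced subgraph `G[L]`. -/
def IsMatchingOn (L : Finset V) (M : V → V) : Prop :=
  IsMatching G M ∧ ∀ v, M v ≠ v → v ∈ L

/-- `M` is a maximum matching of the induced subgraph `G[L]`. -/
def IsMaxMatchingOn (L : Finset V) (M : V → V) : Prop :=
  IsMatchingOn G L M ∧ ∀ M' : V → V, IsMatchingOn G L M' → matchSize M' ≤ matchSize M

/-- `S` is a maximum independent set of the induced subgraph `G[L]`. -/
def IsMaxIndepOn (L : Finset V) (S : Finset V) : Prop :=
  S ⊆ L ∧ Indep G S ∧ ∀ T : Finset V, T ⊆ L → Indep G T → T.card ≤ S.card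

/-- `core` of the induced subgraph `G[L]`. -/
def coreOn (L : Finset V) : Set V := {v | ∀ S : Finset V, IsMaxIndepOn G L S → v ∈ S}

/-- `D(G[L])`: vertices of `L` missed by some maximum matching of `G[L]`. -/
def Dset (L : Finset V) : Set V := {v | v ∈ L ∧ ∃ M : V → V, IsMaxMatchingOn G L M ∧ M v = v}

/-- The Larson boundary `∂_L(G)` of the set `L`. -/
def boundaryL (L : Finset V) : Set V := {v | v ∈ L ∧ ∃ w, w ∉ L ∧ G.Adj v w}

/-- The critical difference `d(G)`. -/
noncomputable def critDiff : ℤ := sSup {d : ℤ | ∃ X : Finset V, diffI G X = d}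

/-- The difference of `S` computed in the induced subgraph `G[L]`. -/
def diffOn (L : Finset V) (S : Finset V) : ℤ := (S.card : ℤ) - ((nbhd G S ∩ L).card : ℤ)

/-- The critical difference of the induced subgraph `G[L]`. -/
noncomputable def critDiffOn (L : Finset V) : ℤ := sSup {d : ℤ | ∃ X : Finset V, X ⊆ L ∧ diffOn G L X = d}

/-- `G` is a König–Egerváry graph: `α(G) + μ(G) = |V(G)|`. -/
def KonigEgervary : Prop :=
  ∃ (S : Finset V) (M : V → V), IsMaxIndep G S ∧ IsMaxMatching G M ∧
    2 * S.card + matchSize M = 2 * Fintype.card V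

/-!
Since `I` is critical, Hall's condition holds from `N(I)` into `I`, so `G[L]` has a matching
with `|N(I)|` edges; as every edge of `G[L]` meets `N(I)`, every maximum matching `M` of `G[L]`
matches `N(I)` into `I`. Folding `L` onto `I` along `M` embeds every independent subset of `L`
into `I`, and no edge joins `I` to `L^c`. Hence `I ∪ T` is a maximum independent set for every
maximum independent set `T` of `G[L^c]`, and every maximum independent set `S` of `G` has
`|S ∩ L| = |I|`, so that `S \ L` is maximum in `G[L^c]` and `S` contains `y` or `M y` for each
`y ∈ I`. A vertex of `I` missed by `M` lies in every critical set `J`, since otherwise `M` would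
inject `N(I) \ N(J)` into a set smaller than `I \ J`; and `ker(G) ⊆ core(G)` because `J ∩ S`
is critical whenever `J` is critical and `S` is maximum.
-/

lemma Indep.mono {W : Type*} {H : SimpleGraph W} {s t : Finset W} (hs : Indep H s)
    (hts : t ⊆ s) : Indep H t :=
  fun u hu v hv => hs u (hts hu) v (hts hv)

lemma exists_isMaxIndepOn {W : Type*} (H : SimpleGraph W) (L : Finset W) :
    ∃ T, IsMaxIndepOn H L T := by
  classical
  obtain ⟨T, hT, hmax⟩ := exists_max_image (L.powerset.filter (Indep H)) card
    ⟨∅, mem_filter.2 ⟨empty_mem_powerset L, by simp [Indep]⟩⟩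
  obtain ⟨hTL, hTind⟩ := mem_filter.1 hT
  exact ⟨T, mem_powerset.1 hTL, hTind,
    fun T' hT'L hT' => hmax T' (mem_filter.2 ⟨mem_powerset.2 hT'L, hT'⟩)⟩

lemma IsMaxIndepOn.card_sdiff_le {W : Type*} [Fintype W] [DecidableEq W] {H : SimpleGraph W}
    {L S T : Finset W} (hT : IsMaxIndepOn H (univ \ L) T) (hS : Indep H S) : #(S \ L) ≤ #T :=
  hT.2.2 _ (sdiff_subset_sdiff (subset_univ S) subset_rfl) (hS.mono sdiff_subset)

lemma exists_isMatching_of_injective {W : Type*} [DecidableEq W] {H : SimpleGraph W}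
    {s : Finset W} (f : s → W) (hf : Function.Injective f)
    (hfs : ∀ x : s, f x ∉ s) (hadj : ∀ x : s, H.Adj x (f x)) :
    ∃ M, IsMatching H M ∧ (∀ x : s, M x = f x ∧ M (f x) = x) ∧
      ∀ v : W, M v ≠ v → v ∈ s ∨ v ∈ Set.range f := by
  let M : W → W := fun v =>
    if h : v ∈ s then f ⟨v, h⟩ else Function.extend f Subtype.val id v
  have hM : ∀ x : s, M x = f x ∧ M (f x) = x := fun x =>
    ⟨by simp [M], by simp [M, hfs x, hf.extend_apply]⟩
  have hfix : ∀ v : W, v ∉ s → v ∉ Set.range f → M v = v := fun v hvs hvf => by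
    simp [M, hvs, Function.extend_apply' _ _ _ hvf]
  have hcases : ∀ v : W, (∃ x : s, v = x) ∨ (∃ x : s, v = f x) ∨ M v = v := fun v => by
    by_cases hvs : v ∈ s
    · exact Or.inl ⟨⟨v, hvs⟩, rfl⟩
    by_cases hvf : v ∈ Set.range f
    · obtain ⟨x, rfl⟩ := hvf
      exact Or.inr (Or.inl ⟨x, rfl⟩)
    · exact Or.inr (Or.inr (hfix v hvs hvf))
  refine ⟨M, ⟨fun v => ?_, fun v hv => ?_⟩, hM, fun v hv => ?_⟩
  · rcases hcases v with ⟨x, rfl⟩ | ⟨x, rfl⟩ | hv <;> simp [*]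
  · rcases hcases v with ⟨x, rfl⟩ | ⟨x, rfl⟩ | hv'
    · simpa [hM] using hadj x
    · simpa [hM] using (hadj x).symm
    · exact absurd hv' hv
  · rcases hcases v with ⟨x, rfl⟩ | ⟨x, rfl⟩ | hv'
    · exact Or.inl x.2
    · exact Or.inr ⟨x, rfl⟩
    · exact absurd hv' hv

def partnerIn {W : Type*} [DecidableEq W] (I : Finset W) (M : W → W) (a : W) : W :=
  if a ∈ I then a else M a

lemma injOn_partnerIn {W : Type*} [DecidableEq W] {H : SimpleGraph W} {I A : Finset W}
    {M : W → W} (hM : IsMatching H M) (hA : Indep H A) : Set.InjOn (partnerIn I M) A := by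
  have hcross : ∀ a ∈ A, ∀ b ∈ A, a ∈ I → b ∉ I → a ≠ M b := by
    intro a ha b hb haI hbI hab
    have hMb : M b ≠ b := fun h => hbI (h ▸ hab ▸ haI)
    exact hA b hb a ha (hab ▸ hM.2 b hMb)
  intro a ha b hb hab
  unfold partnerIn at hab
  split_ifs at hab with haI hbI hbI
  · exact hab
  · exact absurd hab (hcross a ha b hb haI hbI)
  · exact absurd hab.symm (hcross b hb a ha hbI haI)
  · exact hM.1.injective hab

section

variable {G} {I J S T X A : Finset V} {M : V → V}

lemma mem_nbhd {v : V} : v ∈ nbhd G S ↔ ∃ u ∈ S, G.Adj u v := by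
  simp [nbhd]

lemma nbhd_mono (h : S ⊆ T) : nbhd G S ⊆ nbhd G T := by
  unfold nbhd
  exact biUnion_subset_biUnion_of_subset_left _ h

lemma nbhd_union : nbhd G (S ∪ T) = nbhd G S ∪ nbhd G T :=
  union_biUnion

lemma Indep.disjoint_nbhd (hS : Indep G S) : Disjoint S (nbhd G S) := by
  refine disjoint_left.2 fun v hv hvN => ?_
  obtain ⟨u, hu, huv⟩ := mem_nbhd.1 hvN
  exact hS u hu v hv huv

lemma indep_sdiff_nbhd (X : Finset V) : Indep G (X \ nbhd G X) := by
  intro u hu v hv huv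
  exact (mem_sdiff.1 hv).2 (mem_nbhd.2 ⟨u, (mem_sdiff.1 hu).1, huv⟩)

lemma nbhd_sdiff_nbhd_subset (X Y : Finset V) : nbhd G (Y \ nbhd G X) ⊆ nbhd G Y \ X := by
  intro y hy
  obtain ⟨u, hu, huy⟩ := mem_nbhd.1 hy
  refine mem_sdiff.2 ⟨mem_nbhd.2 ⟨u, (mem_sdiff.1 hu).1, huy⟩, fun hyX => ?_⟩
  exact (mem_sdiff.1 hu).2 (mem_nbhd.2 ⟨y, hyX, huy.symm⟩)

lemma diffI_le_diffI_sdiff_nbhd (X : Finset V) : diffI G X ≤ diffI G (X \ nbhd G X) := by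
  have hN := card_le_card (nbhd_sdiff_nbhd_subset (G := G) X X)
  have hX := card_sdiff_add_card_inter X (nbhd G X)
  have hNX := card_sdiff_add_card_inter (nbhd G X) X
  rw [inter_comm] at hNX
  unfold diffI
  omega

lemma IsCritIndep.diffI_le (hJ : IsCritIndep G J) (X : Finset V) : diffI G X ≤ diffI G J :=
  (diffI_le_diffI_sdiff_nbhd X).trans (hJ.2 _ (indep_sdiff_nbhd X))

lemma IsCritIndep.card_sdiff_le_card_nbhd_sdiff (hJ : IsCritIndep G J) (X : Finset V) :
    #(X \ J) ≤ #(nbhd G X \ nbhd G J) := by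
  have h := hJ.diffI_le (X ∪ J)
  have hX := card_sdiff_add_card X J
  have hN := card_sdiff_add_card (nbhd G X) (nbhd G J)
  rw [diffI, diffI, nbhd_union] at h
  omega

lemma IsMaxIndep.card_sdiff_le_card_inter_nbhd (hS : IsMaxIndep G S) (hJ : Indep G J) :
    #(J \ S) ≤ #(S ∩ nbhd G J) := by
  have hind : Indep G ((S \ nbhd G J) ∪ (J \ S)) := by
    intro u hu v hv huv
    rcases mem_union.1 hu with hu | hu <;> rcases mem_union.1 hv with hv | hv
    · exact hS.1 u (mem_sdiff.1 hu).1 v (mem_sdiff.1 hv).1 huv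
    · exact (mem_sdiff.1 hu).2 (mem_nbhd.2 ⟨v, (mem_sdiff.1 hv).1, huv.symm⟩)
    · exact (mem_sdiff.1 hv).2 (mem_nbhd.2 ⟨u, (mem_sdiff.1 hu).1, huv⟩)
    · exact hJ u (mem_sdiff.1 hu).1 v (mem_sdiff.1 hv).1 huv
  have hdisj : Disjoint (S \ nbhd G J) (J \ S) :=
    disjoint_left.2 fun v hv hv' => (mem_sdiff.1 hv').2 (mem_sdiff.1 hv).1
  have hle := hS.2 _ hind
  rw [card_union_of_disjoint hdisj] at hle
  have := card_sdiff_add_card_inter S (nbhd G J)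
  omega

lemma IsCritIndep.inter_isMaxIndep (hJ : IsCritIndep G J) (hS : IsMaxIndep G S) :
    IsCritIndep G (J ∩ S) := by
  refine ⟨hJ.1.mono inter_subset_left, fun X hX => (hJ.2 X hX).trans ?_⟩
  have hN : nbhd G (J ∩ S) ⊆ nbhd G J \ S := by
    intro y hy
    obtain ⟨u, hu, huy⟩ := mem_nbhd.1 hy
    exact mem_sdiff.2 ⟨nbhd_mono inter_subset_left hy,
      fun hyS => hS.1 u (mem_inter.1 hu).2 y hyS huy⟩
  have hNcard := card_le_card hN
  have hex := hS.card_sdiff_le_card_inter_nbhd hJ.1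
  have hJcard := card_inter_add_card_sdiff J S
  have hNJ := card_sdiff_add_card_inter (nbhd G J) S
  rw [inter_comm (nbhd G J)] at hNJ
  unfold diffI
  omega

lemma IsCritIndep.card_le_card_nbhd_inter (hI : IsCritIndep G I) (hX : X ⊆ nbhd G I) :
    #X ≤ #(nbhd G X ∩ I) := by
  have hcrit := hI.2 _ (hI.1.mono (sdiff_subset (t := nbhd G X)))
  have hNcard := card_le_card (nbhd_sdiff_nbhd_subset (G := G) X I)
  rw [card_sdiff_of_subset hX] at hNcard
  have hXN := card_le_card hX
  have hIcard := card_sdiff_add_card_inter I (nbhd G X)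
  rw [inter_comm] at hIcard
  unfold diffI at hcrit
  omega

lemma IsCritIndep.exists_injective_nbhd (hI : IsCritIndep G I) :
    ∃ f : nbhd G I → V, Function.Injective f ∧ ∀ x, f x ∈ I ∧ G.Adj x (f x) := by
  obtain ⟨f, hf, hfI⟩ := (all_card_le_biUnion_card_iff_exists_injective
    fun x : nbhd G I => G.neighborFinset x ∩ I).1 fun s => by
      have hbiUnion : s.biUnion (fun x => G.neighborFinset x ∩ I)
          = nbhd G (s.image Subtype.val) ∩ I := by
        ext y
        simp only [mem_biUnion, mem_inter, SimpleGraph.mem_neighborFinset, mem_nbhd, mem_image]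
        aesop
      rw [hbiUnion, ← card_image_of_injective s Subtype.val_injective]
      exact hI.card_le_card_nbhd_inter (by simp [image_subset_iff])
  exact ⟨f, hf, fun x => by simpa [and_comm] using hfI x⟩

lemma IsCritIndep.exists_isMatchingOn (hI : IsCritIndep G I) :
    ∃ M, IsMatchingOn G (I ∪ nbhd G I) M ∧ 2 * #(nbhd G I) ≤ matchSize M := by
  obtain ⟨f, hf, hfI⟩ := hI.exists_injective_nbhd
  have hfN : ∀ x : nbhd G I, f x ∉ nbhd G I := fun x =>
    disjoint_left.1 hI.1.disjoint_nbhd (hfI x).1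
  obtain ⟨M, hM, hMf, hsupp⟩ :=
    exists_isMatching_of_injective f hf hfN fun x => (hfI x).2
  refine ⟨M, ⟨hM, fun v hv => ?_⟩, ?_⟩
  · rcases hsupp v hv with hv | ⟨x, rfl⟩
    · exact mem_union_right _ hv
    · exact mem_union_left _ (hfI x).1
  · have hsub : nbhd G I ∪ univ.image f ⊆ univ.filter fun v => M v ≠ v := by
      intro v hv
      simp only [mem_union, mem_image, mem_univ, true_and] at hv
      rcases hv with hv | ⟨x, rfl⟩
      · simpa [(hMf ⟨v, hv⟩).1] using (ne_of_mem_of_not_mem hv (hfN _)).symm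
      · simpa [(hMf x).2] using ne_of_mem_of_not_mem x.2 (hfN x)
    have hdisj : Disjoint (nbhd G I) (univ.image f) :=
      disjoint_right.2 fun v hv => by
        obtain ⟨x, -, rfl⟩ := mem_image.1 hv
        exact hfN x
    have := card_le_card hsub
    rw [card_union_of_disjoint hdisj, card_image_of_injective _ hf, card_univ,
      Fintype.card_coe] at this
    unfold matchSize
    omega

/-- The partners of the matched vertices of `I` lie in `N(I)`; the size bound leaves at least
`|N(I)|` matched vertices in `I`, so `M` maps them onto `N(I)`. -/
lemma IsMatchingOn.apply_mem_of_matchSize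
    (hM : IsMatchingOn G (I ∪ nbhd G I) M) (hsize : 2 * #(nbhd G I) ≤ matchSize M) :
    ∀ x ∈ nbhd G I, M x ∈ I := by
  set P := I.filter fun v => M v ≠ v
  have hP : (univ.filter fun v => M v ≠ v) ⊆ P ∪ nbhd G I := by
    intro v hv
    have hvM := (mem_filter.1 hv).2
    rcases mem_union.1 (hM.2 v hvM) with h | h
    · exact mem_union_left _ (mem_filter.2 ⟨h, hvM⟩)
    · exact mem_union_right _ h
  have hcard : #(nbhd G I) ≤ #P := by
    have := (card_le_card hP).trans (card_union_le _ _)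
    unfold matchSize at hsize
    omega
  have hmaps : Set.MapsTo M P (nbhd G I) := fun v hv => by
    obtain ⟨hvI, hvM⟩ := mem_filter.1 hv
    exact mem_nbhd.2 ⟨v, hvI, hM.1.2 v hvM⟩
  have hinj : Set.InjOn M P := hM.1.1.injective.injOn
  intro x hx
  obtain ⟨v, hv, rfl⟩ := surjOn_of_injOn_of_card_le M hmaps hinj hcard hx
  rw [hM.1.1 v]
  exact (mem_filter.1 hv).1

lemma IsMaxMatchingOn.apply_mem_of_mem_nbhd (hI : IsCritIndep G I)
    (hM : IsMaxMatchingOn G (I ∪ nbhd G I) M) : ∀ x ∈ nbhd G I, M x ∈ I := by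
  obtain ⟨M₀, hM₀, hsize⟩ := hI.exists_isMatchingOn
  exact hM.1.apply_mem_of_matchSize (hsize.trans (hM.2 M₀ hM₀))

lemma partnerIn_mem (hMN : ∀ x ∈ nbhd G I, M x ∈ I) {a : V} (ha : a ∈ I ∪ nbhd G I) :
    partnerIn I M a ∈ I := by
  unfold partnerIn
  split_ifs with haI
  · exact haI
  · exact hMN a ((mem_union.1 ha).resolve_left haI)

lemma card_le_card_of_subset_union_nbhd (hM : IsMatching G M)
    (hMN : ∀ x ∈ nbhd G I, M x ∈ I) (hA : Indep G A) (hAL : A ⊆ I ∪ nbhd G I) :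
    #A ≤ #I :=
  card_le_card_of_injOn _ (fun _ ha => partnerIn_mem hMN (hAL ha)) (injOn_partnerIn hM hA)

lemma mem_or_apply_mem_of_card_le (hM : IsMatching G M) (hMN : ∀ x ∈ nbhd G I, M x ∈ I)
    (hA : Indep G A) (hAL : A ⊆ I ∪ nbhd G I) (hcard : #I ≤ #A) {y : V} (hy : y ∈ I) :
    y ∈ A ∨ M y ∈ A := by
  obtain ⟨a, ha, rfl⟩ := surjOn_of_injOn_of_card_le _
    (fun _ ha => partnerIn_mem hMN (hAL ha)) (injOn_partnerIn hM hA) hcard hy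
  by_cases haI : a ∈ I
  · exact Or.inl (by simpa [partnerIn, haI] using ha)
  · exact Or.inr (by simpa [partnerIn, haI, hM.1 a] using ha)

lemma Indep.card_le_card_add_card (hM : IsMatching G M) (hMN : ∀ x ∈ nbhd G I, M x ∈ I)
    (hT : IsMaxIndepOn G (univ \ (I ∪ nbhd G I)) T) (hS : Indep G S) : #S ≤ #I + #T := by
  have hL := card_le_card_of_subset_union_nbhd hM hMN (hS.mono inter_subset_left)
    inter_subset_right
  have hLc := hT.card_sdiff_le hS
  have := card_inter_add_card_sdiff S (I ∪ nbhd G I)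
  omega

lemma disjoint_of_isMaxIndepOn_compl (hT : IsMaxIndepOn G (univ \ (I ∪ nbhd G I)) T) :
    Disjoint I T :=
  disjoint_right.2 fun _ ht htI => (mem_sdiff.1 (hT.1 ht)).2 (mem_union_left _ htI)

lemma isMaxIndep_union (hI : Indep G I) (hM : IsMatching G M)
    (hMN : ∀ x ∈ nbhd G I, M x ∈ I) (hT : IsMaxIndepOn G (univ \ (I ∪ nbhd G I)) T) :
    IsMaxIndep G (I ∪ T) := by
  have hcross : ∀ u ∈ I, ∀ t ∈ T, ¬ G.Adj u t := fun u hu t ht hut =>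
    (mem_sdiff.1 (hT.1 ht)).2 (mem_union_right _ (mem_nbhd.2 ⟨u, hu, hut⟩))
  refine ⟨fun u hu v hv huv => ?_, fun S hS => ?_⟩
  · rcases mem_union.1 hu with hu | hu <;> rcases mem_union.1 hv with hv | hv
    · exact hI u hu v hv huv
    · exact hcross u hu v hv huv
    · exact hcross v hv u hu huv.symm
    · exact hT.2.1 u hu v hv huv
  · rw [card_union_of_disjoint (disjoint_of_isMaxIndepOn_compl hT)]
    exact hS.card_le_card_add_card hM hMN hT

lemma IsMaxIndep.card_inter_eq_and_card_sdiff_eq (hI : Indep G I) (hM : IsMatching G M)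
    (hMN : ∀ x ∈ nbhd G I, M x ∈ I) (hS : IsMaxIndep G S)
    (hT : IsMaxIndepOn G (univ \ (I ∪ nbhd G I)) T) :
    #(S ∩ (I ∪ nbhd G I)) = #I ∧ #(S \ (I ∪ nbhd G I)) = #T := by
  have hIT := hS.2 _ (isMaxIndep_union hI hM hMN hT).1
  rw [card_union_of_disjoint (disjoint_of_isMaxIndepOn_compl hT)] at hIT
  have hL := card_le_card_of_subset_union_nbhd hM hMN (hS.1.mono inter_subset_left)
    inter_subset_right
  have hLc := hT.card_sdiff_le hS.1
  have := card_inter_add_card_sdiff S (I ∪ nbhd G I)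
  omega

lemma IsMaxIndep.sdiff_isMaxIndepOn (hI : Indep G I) (hM : IsMatching G M)
    (hMN : ∀ x ∈ nbhd G I, M x ∈ I) (hS : IsMaxIndep G S) :
    IsMaxIndepOn G (univ \ (I ∪ nbhd G I)) (S \ (I ∪ nbhd G I)) := by
  obtain ⟨T, hT⟩ := exists_isMaxIndepOn G (univ \ (I ∪ nbhd G I))
  refine ⟨sdiff_subset_sdiff (subset_univ S) subset_rfl, hS.1.mono sdiff_subset,
    fun T' hT'L hT' => ?_⟩
  rw [(hS.card_inter_eq_and_card_sdiff_eq hI hM hMN hT).2]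
  exact hT.2.2 T' hT'L hT'

lemma IsMaxIndep.mem_or_apply_mem (hI : Indep G I) (hM : IsMatching G M)
    (hMN : ∀ x ∈ nbhd G I, M x ∈ I) (hS : IsMaxIndep G S) {y : V} (hy : y ∈ I) :
    y ∈ S ∨ M y ∈ S := by
  obtain ⟨T, hT⟩ := exists_isMaxIndepOn G (univ \ (I ∪ nbhd G I))
  have hcard := (hS.card_inter_eq_and_card_sdiff_eq hI hM hMN hT).1
  exact (mem_or_apply_mem_of_card_le hM hMN (hS.1.mono inter_subset_left) inter_subset_right
    hcard.ge hy).imp mem_of_mem_inter_left mem_of_mem_inter_left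

/-- `M` injects `N(I) \ N(J)` into `(I \ J) \ {v}`, while criticality of `J` gives
`|I \ J| ≤ |N(I) \ N(J)|`. -/
lemma mem_of_isCritIndep_of_apply_eq_self (hI : Indep G I) (hM : IsMatching G M)
    (hMN : ∀ x ∈ nbhd G I, M x ∈ I) {v : V} (hv : v ∈ I) (hMv : M v = v)
    (hJ : IsCritIndep G J) : v ∈ J := by
  by_contra hvJ
  have hmaps : Set.MapsTo M ↑(nbhd G I \ nbhd G J) ↑((I \ J).erase v) := by
    intro x hx
    obtain ⟨hxI, hxJ⟩ := mem_sdiff.1 hx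
    have hMxI := hMN x hxI
    have hMx : M x ≠ x := ne_of_mem_of_not_mem hMxI (disjoint_right.1 hI.disjoint_nbhd hxI)
    refine mem_erase.2 ⟨fun hMxv => ?_, mem_sdiff.2 ⟨hMxI, fun hMxJ => ?_⟩⟩
    · have hxv : x = v := by rw [← hM.1 x, hMxv, hMv]
      exact disjoint_left.1 hI.disjoint_nbhd hv (hxv ▸ hxI)
    · exact hxJ (mem_nbhd.2 ⟨M x, hMxJ, (hM.2 x hMx).symm⟩)
  have hle := card_le_card_of_injOn M hmaps hM.1.injective.injOn
  have hlt := card_erase_lt_of_mem (mem_sdiff.2 ⟨hv, hvJ⟩)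
  have hcrit := hJ.card_sdiff_le_card_nbhd_sdiff I
  omega

end

theorem stmt17 (I : Finset V) (hI : IsMaxCritIndep G I) (M : V → V)
    (hM : IsMaxMatchingOn G (I ∪ nbhd G I) M) :
    core G = coreOn G (univ \ (I ∪ nbhd G I)) ∪
      M '' (↑(nbhd G I) \ corona G) ∪ kerS G := by
  have hInd : Indep G I := hI.1.1
  have hMat : IsMatching G M := hM.1.1
  have hMN := hM.apply_mem_of_mem_nbhd hI.1
  ext v
  constructor
  · intro hv
    obtain ⟨T, hT⟩ := exists_isMaxIndepOn G (univ \ (I ∪ nbhd G I))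
    rcases mem_union.1 (hv _ (isMaxIndep_union hInd hMat hMN hT)) with hvI | hvT
    · by_cases hMv : M v = v
      · exact Or.inr fun J hJ => mem_of_isCritIndep_of_apply_eq_self hInd hMat hMN hvI hMv hJ
      · refine Or.inl (Or.inr ⟨M v, ⟨mem_nbhd.2 ⟨v, hvI, hMat.2 v hMv⟩, ?_⟩, hMat.1 v⟩)
        rintro ⟨S, hS, hMvS⟩
        exact hS.1 v (hv S hS) (M v) hMvS (hMat.2 v hMv)
    · refine Or.inl (Or.inl fun T' hT' => ?_)
      have hvI : v ∉ I := disjoint_right.1 (disjoint_of_isMaxIndepOn_compl hT) hvT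
      exact (mem_union.1 (hv _ (isMaxIndep_union hInd hMat hMN hT'))).resolve_left hvI
  · rintro ((hv | ⟨x, ⟨hxN, hxS⟩, rfl⟩) | hv) S hS
    · exact (mem_sdiff.1 (hv _ (hS.sdiff_isMaxIndepOn hInd hMat hMN))).1
    · refine (hS.mem_or_apply_mem hInd hMat hMN (hMN x hxN)).resolve_right fun hx => hxS ?_
      exact ⟨S, hS, hMat.1 x ▸ hx⟩
    · exact mem_of_mem_inter_right (hv _ (hI.1.inter_isMaxIndep hS))
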